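/- If ξ is a random variable satisfying P(c₁ ≤ |ξ - ξ'| ≤ c₂) ≥ c₃ for an independent copy ξ' and positive constants c₁ < c₂ and c₃ > 0, then the random variable ξ - ξ' also satisfies an anti-concentration condition of the same type: there exist positive constants c₁' < c₂' and c₃' > 0 such that P(c₁' ≤ |(ξ-ξ') - (ξ-ξ')''| ≤ c₂') ≥ c₃', where (ξ-ξ')'' is an independent copy of ξ - ξ'. -/
import Mathlib

open MeasureTheory ProbabilityTheory

/-- If ξ satisfies the anti-concentration Condition 1.2 (with independent copy ξ'),
then ξ - ξ' also satisfies a condition of the same type. -/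
theorem stmt_0
    {Ω : Type*} [MeasureSpace Ω] [IsProbabilityMeasure (ℙ : Measure Ω)]
    (ξ ξ' : Ω → ℝ) (hξ : Measurable ξ) (hξ' : Measurable ξ')
    (hindep : IndepFun ξ ξ') (hid : IdentDistrib ξ ξ')
    (c₁ c₂ c₃ : ℝ) (hc₁ : 0 < c₁) (hc₁₂ : c₁ < c₂) (hc₃ : 0 < c₃)
    (hanti : c₃ ≤ (ℙ {ω | c₁ ≤ |ξ ω - ξ' ω| ∧ |ξ ω - ξ' ω| ≤ c₂}).toReal) :
    ∃ c₁' c₂' c₃' : ℝ, 0 < c₁' ∧ c₁' < c₂' ∧ 0 < c₃' ∧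
      ∀ (Ω' : Type) (_ : MeasureSpace Ω') (_ : IsProbabilityMeasure (ℙ : Measure Ω'))
        (Z Z' : Ω' → ℝ), Measurable Z → Measurable Z' → IndepFun Z Z' →
        IdentDistrib Z (fun ω => ξ ω - ξ' ω) ℙ ℙ →
        IdentDistrib Z' (fun ω => ξ ω - ξ' ω) ℙ ℙ →
        c₃' ≤ (ℙ {ω | c₁' ≤ |Z ω - Z' ω| ∧ |Z ω - Z' ω| ≤ c₂'}).toReal := by
  have hD : Measurable (fun ω => ξ ω - ξ' ω) := hξ.sub hξ'
  have hD' : Measurable (fun ω => ξ' ω - ξ ω) := hξ'.sub hξ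
  -- symmetry of the joint distribution
  have hjoint : Measure.map (fun ω => (ξ ω, ξ' ω)) ℙ
      = Measure.map (fun ω => (ξ' ω, ξ ω)) ℙ := by
    rw [(indepFun_iff_map_prod_eq_prod_map_map hξ.aemeasurable hξ'.aemeasurable).mp hindep,
        (indepFun_iff_map_prod_eq_prod_map_map hξ'.aemeasurable hξ.aemeasurable).mp hindep.symm,
        hid.map_eq]
  have hsym : IdentDistrib (fun ω => ξ ω - ξ' ω) (fun ω => ξ' ω - ξ ω) ℙ ℙ := by
    refine ⟨hD.aemeasurable, hD'.aemeasurable, ?_⟩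
    have h1 : (fun ω => ξ ω - ξ' ω)
        = (fun p : ℝ × ℝ => p.1 - p.2) ∘ (fun ω => (ξ ω, ξ' ω)) := rfl
    have h2 : (fun ω => ξ' ω - ξ ω)
        = (fun p : ℝ × ℝ => p.1 - p.2) ∘ (fun ω => (ξ' ω, ξ ω)) := rfl
    rw [h1, h2, ← Measure.map_map (by fun_prop) (by fun_prop),
        ← Measure.map_map (by fun_prop) (by fun_prop), hjoint]
  -- p+ = p-
  have hpm : ℙ ((fun ω => ξ ω - ξ' ω) ⁻¹' Set.Icc c₁ c₂)
      = ℙ ((fun ω => ξ ω - ξ' ω) ⁻¹' Set.Icc (-c₂) (-c₁)) := by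
    have h := hsym.measure_mem_eq (measurableSet_Icc : MeasurableSet (Set.Icc c₁ c₂))
    rw [h]
    congr 1
    ext ω
    simp only [Set.mem_preimage, Set.mem_Icc]
    constructor <;> rintro ⟨h1, h2⟩ <;> constructor <;> linarith
  -- split original set
  have hsplit : {ω | c₁ ≤ |ξ ω - ξ' ω| ∧ |ξ ω - ξ' ω| ≤ c₂}
      = (fun ω => ξ ω - ξ' ω) ⁻¹' Set.Icc c₁ c₂
        ∪ (fun ω => ξ ω - ξ' ω) ⁻¹' Set.Icc (-c₂) (-c₁) := by
    ext ω
    simp only [Set.mem_setOf_eq, Set.mem_union, Set.mem_preimage, Set.mem_Icc]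
    rcases le_or_gt 0 (ξ ω - ξ' ω) with h | h
    · rw [abs_of_nonneg h]
      constructor
      · rintro ⟨h1, h2⟩; exact Or.inl ⟨h1, h2⟩
      · rintro (⟨h1, h2⟩ | ⟨h1, h2⟩) <;> constructor <;> linarith
    · rw [abs_of_neg h]
      constructor
      · rintro ⟨h1, h2⟩; exact Or.inr ⟨by linarith, by linarith⟩
      · rintro (⟨h1, h2⟩ | ⟨h1, h2⟩) <;> constructor <;> linarith
  have hdisj : Disjoint ((fun ω => ξ ω - ξ' ω) ⁻¹' Set.Icc c₁ c₂)
      ((fun ω => ξ ω - ξ' ω) ⁻¹' Set.Icc (-c₂) (-c₁)) := by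
    apply Set.disjoint_left.mpr
    rintro ω ⟨h1, h2⟩ ⟨h3, h4⟩
    linarith
  have hmeas_union : ℙ {ω | c₁ ≤ |ξ ω - ξ' ω| ∧ |ξ ω - ξ' ω| ≤ c₂}
      = ℙ ((fun ω => ξ ω - ξ' ω) ⁻¹' Set.Icc c₁ c₂)
        + ℙ ((fun ω => ξ ω - ξ' ω) ⁻¹' Set.Icc (-c₂) (-c₁)) := by
    rw [hsplit]
    exact measure_union hdisj (hD measurableSet_Icc)
  -- c₃/2 ≤ p+
  have hp : c₃ / 2 ≤ (ℙ ((fun ω => ξ ω - ξ' ω) ⁻¹' Set.Icc c₁ c₂)).toReal := by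
    have h2 : (ℙ {ω | c₁ ≤ |ξ ω - ξ' ω| ∧ |ξ ω - ξ' ω| ≤ c₂}).toReal
        = 2 * (ℙ ((fun ω => ξ ω - ξ' ω) ⁻¹' Set.Icc c₁ c₂)).toReal := by
      rw [hmeas_union, ← hpm, ENNReal.toReal_add (measure_ne_top _ _) (measure_ne_top _ _)]
      ring
    linarith [hanti, h2 ▸ hanti]
  refine ⟨2 * c₁, 2 * c₂, c₃ ^ 2 / 4, by linarith, by linarith, by positivity, ?_⟩
  intro Ω' mΩ' hPΩ' Z Z' hZ hZ' hZZ' hZid hZ'id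
  have hA : Z ⁻¹' Set.Icc c₁ c₂ ∩ Z' ⁻¹' Set.Icc (-c₂) (-c₁)
      ⊆ {ω | 2 * c₁ ≤ |Z ω - Z' ω| ∧ |Z ω - Z' ω| ≤ 2 * c₂} := by
    rintro ω ⟨⟨h1, h2⟩, ⟨h3, h4⟩⟩
    have hnn : (0:ℝ) ≤ Z ω - Z' ω := by linarith
    rw [Set.mem_setOf_eq, abs_of_nonneg hnn]
    constructor <;> linarith
  have hZp : ℙ (Z ⁻¹' Set.Icc c₁ c₂) = ℙ ((fun ω => ξ ω - ξ' ω) ⁻¹' Set.Icc c₁ c₂) :=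
    hZid.measure_mem_eq measurableSet_Icc
  have hZ'p : ℙ (Z' ⁻¹' Set.Icc (-c₂) (-c₁))
      = ℙ ((fun ω => ξ ω - ξ' ω) ⁻¹' Set.Icc c₁ c₂) :=
    (hZ'id.measure_mem_eq measurableSet_Icc).trans hpm.symm
  have hprod : ℙ (Z ⁻¹' Set.Icc c₁ c₂ ∩ Z' ⁻¹' Set.Icc (-c₂) (-c₁))
      = ℙ (Z ⁻¹' Set.Icc c₁ c₂) * ℙ (Z' ⁻¹' Set.Icc (-c₂) (-c₁)) :=
    by
    have h := (indepFun_iff_measure_inter_preimage_eq_mul (μ := (ℙ : Measure Ω'))).mp hZZ'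
    exact h _ _ measurableSet_Icc measurableSet_Icc
  have hmono := measure_mono (μ := (ℙ : Measure Ω')) hA
  have hle : (ℙ (Z ⁻¹' Set.Icc c₁ c₂ ∩ Z' ⁻¹' Set.Icc (-c₂) (-c₁))).toReal
      ≤ (ℙ {ω | 2 * c₁ ≤ |Z ω - Z' ω| ∧ |Z ω - Z' ω| ≤ 2 * c₂}).toReal :=
    ENNReal.toReal_le_toReal (measure_ne_top _ _) (measure_ne_top _ _) |>.mpr hmono
  have hval : (ℙ (Z ⁻¹' Set.Icc c₁ c₂ ∩ Z' ⁻¹' Set.Icc (-c₂) (-c₁))).toReal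
      = (ℙ ((fun ω => ξ ω - ξ' ω) ⁻¹' Set.Icc c₁ c₂)).toReal
        * (ℙ ((fun ω => ξ ω - ξ' ω) ⁻¹' Set.Icc c₁ c₂)).toReal := by
    rw [hprod, hZp, hZ'p, ENNReal.toReal_mul]
  have : c₃ / 2 * (c₃ / 2)
      ≤ (ℙ (Z ⁻¹' Set.Icc c₁ c₂ ∩ Z' ⁻¹' Set.Icc (-c₂) (-c₁))).toReal := by
    rw [hval]
    exact mul_le_mul hp hp (by linarith) ENNReal.toReal_nonneg
  nlinarith [hle, this]
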